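/- Let H = (X,E) be a hypergraph in which every hyperedge is non-empty, every vertex lies in at least one hyperedge, and E is non-empty. Let D_H be the symmetric digraph whose vertex set is X ∪ E ∪ {z} (z a new vertex), with a directed 2-cycle between x ∈ X and e ∈ E whenever x ∈ e, and a directed 2-cycle between z and every x ∈ X. Then H has a proper 2-colouring (a 2-colouring of X with no monochromatic hyperedge) if and only if D_H has a 2-out-colouring. -/

import Mathlib

/-- A 2-out-colouring: a colouring of the vertices with 2 colours such that
no out-neighbourhood is monochromatic. -/
def HasOutColouring {V : Type*} (A : V → V → Prop) (r : ℕ) : Prop :=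
  ∃ γ : V → Fin r, ∀ v : V, ∃ u w : V, A v u ∧ A v w ∧ γ u ≠ γ w

/-- The symmetric digraph `D_H` associated with the hypergraph with vertex set `X` and
hyperedges `edges i` (`i : ι`): its vertices are `X ⊕ ι ⊕ Unit` (vertices, hyperedges
and the extra vertex `z`), with a directed 2-cycle between `x : X` and `i : ι` whenever
`x ∈ edges i`, and a directed 2-cycle between `z` and every `x : X`. -/
def DHAdj {X ι : Type*} (edges : ι → Set X) :
    (X ⊕ ι ⊕ Unit) → (X ⊕ ι ⊕ Unit) → Prop
  | Sum.inl x, Sum.inr (Sum.inl i) => x ∈ edges i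
  | Sum.inr (Sum.inl i), Sum.inl x => x ∈ edges i
  | Sum.inl _, Sum.inr (Sum.inr _) => True
  | Sum.inr (Sum.inr _), Sum.inl _ => True
  | _, _ => False

section

variable {X ι : Type*} (edges : ι → Set X)

lemma exists_eq_inl_of_dhAdj_inr_inl {i : ι} {v : X ⊕ ι ⊕ Unit}
    (h : DHAdj edges (.inr (.inl i)) v) : ∃ x ∈ edges i, v = .inl x := by
  rcases v with x | _ | _
  · exact ⟨x, h, rfl⟩
  all_goals exact h.elim

theorem exists_proper_colouring_of_hasOutColouring {r : ℕ}
    (h : HasOutColouring (DHAdj edges) r) :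
    ∃ c : X → Fin r, ∀ i : ι, ∃ x ∈ edges i, ∃ y ∈ edges i, c x ≠ c y := by
  obtain ⟨γ, hγ⟩ := h
  refine ⟨γ ∘ Sum.inl, fun i => ?_⟩
  obtain ⟨u, w, hu, hw, huw⟩ := hγ (.inr (.inl i))
  obtain ⟨x, hx, rfl⟩ := exists_eq_inl_of_dhAdj_inr_inl edges hu
  obtain ⟨y, hy, rfl⟩ := exists_eq_inl_of_dhAdj_inr_inl edges hw
  exact ⟨x, hx, y, hy, huw⟩

/-- Hyperedges get colour `0` and `z` colour `1`, so every `x ∈ X`, which sees `z` and a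
hyperedge containing it, has a bichromatic out-neighbourhood. -/
theorem hasOutColouring_of_proper_colouring [Nonempty ι] {r : ℕ} (hr : 1 < r)
    (hcov : ∀ x : X, ∃ i : ι, x ∈ edges i) {c : X → Fin r}
    (hc : ∀ i : ι, ∃ x ∈ edges i, ∃ y ∈ edges i, c x ≠ c y) :
    HasOutColouring (DHAdj edges) r := by
  refine ⟨Sum.elim c (Sum.elim (fun _ => ⟨0, by omega⟩) (fun _ => ⟨1, hr⟩)), ?_⟩
  rintro (x | i | z)
  · obtain ⟨i, hi⟩ := hcov x
    exact ⟨.inr (.inl i), .inr (.inr ()), hi, trivial, by simp⟩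
  · obtain ⟨x, hx, y, hy, hxy⟩ := hc i
    exact ⟨.inl x, .inl y, hx, hy, hxy⟩
  · obtain ⟨x, -, y, -, hxy⟩ := hc (Classical.arbitrary ι)
    exact ⟨.inl x, .inl y, trivial, trivial, hxy⟩

end

theorem stmt19_general {X ι : Type*} (edges : ι → Set X)
    (hcov : ∀ x : X, ∃ i : ι, x ∈ edges i)
    (hE : Nonempty ι) :
    (∃ c : X → Fin 2, ∀ i : ι, ∃ x ∈ edges i, ∃ y ∈ edges i, c x ≠ c y) ↔
      HasOutColouring (DHAdj edges) 2 :=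
  ⟨fun ⟨_, hc⟩ => hasOutColouring_of_proper_colouring edges one_lt_two hcov hc,
    exists_proper_colouring_of_hasOutColouring edges⟩

/-- Let `H` be a hypergraph in which every hyperedge is non-empty, every vertex lies in
at least one hyperedge and there is at least one hyperedge. Then `H` has a proper
2-colouring (no monochromatic hyperedge) if and only if the symmetric digraph `D_H`
has a 2-out-colouring. -/
theorem stmt19 {X ι : Type*} [Fintype X] [Fintype ι] (edges : ι → Set X)
    (hne : ∀ i : ι, (edges i).Nonempty)
    (hcov : ∀ x : X, ∃ i : ι, x ∈ edges i)
    (hE : Nonempty ι) :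
    (∃ c : X → Fin 2, ∀ i : ι, ∃ x ∈ edges i, ∃ y ∈ edges i, c x ≠ c y) ↔
      HasOutColouring (DHAdj edges) 2 :=
  stmt19_general edges hcov hE
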